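/- arXiv:1803.08189 — 4 statements merged into one kernel-verified Lean document; each statement's English description precedes it below -/
import Mathlib

section
/- Let 0 < λ ≤ 1 and let f: ℕ → ℝ satisfy the recursion f(a) = a + (1 − λ) f(a+1) + g for all a ≥ a₀, where g ∈ ℝ is a constant, and suppose (1 − λ)^a f(a) → 0 as a → ∞. Then f(a) = (a + g)/λ + (1 − λ)/λ² for all a ≥ a₀. -/
set_option maxHeartbeats 800000


open Filter

/-- solution of the backward recursion
`f a = a + (1 − λ) f (a+1) + g` under `(1 − λ)^a f a → 0`. -/
theorem stmt3 (lam g : ℝ) (hlam0 : 0 < lam) (hlam1 : lam ≤ 1)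
    (f : ℕ → ℝ) (a₀ : ℕ)
    (hrec : ∀ a : ℕ, a₀ ≤ a → f a = (a : ℝ) + (1 - lam) * f (a + 1) + g)
    (hlim : Tendsto (fun a : ℕ => (1 - lam)^a * f a) atTop (nhds 0)) :
    ∀ a : ℕ, a₀ ≤ a → f a = ((a : ℝ) + g)/lam + (1 - lam)/lam^2 := by
  intro a ha
  set q : ℝ := 1 - lam with hqdef
  have hq0 : 0 ≤ q := by simp [hqdef]; linarith
  have hq1 : q < 1 := by simp [hqdef]; linarith
  have hlamne : lam ≠ 0 := ne_of_gt hlam0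
  set φ : ℕ → ℝ := fun n => ((n : ℝ) + g)/lam + q/lam^2 with hφdef
  have hφ : ∀ n : ℕ, φ n = (n : ℝ) + q * φ (n + 1) + g := by
    intro n
    simp only [hφdef, hqdef, Nat.cast_add, Nat.cast_one]
    field_simp
    ring
  set h : ℕ → ℝ := fun n => f n - φ n with hhdef
  have hh : ∀ n : ℕ, a₀ ≤ n → h n = q * h (n + 1) := by
    intro n hn
    have h1 := hrec n hn
    have h2 := hφ n
    simp only [hhdef]
    linear_combination h1 - h2
  have hiter : ∀ n : ℕ, h a = q ^ n * h (a + n) := by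
    intro n
    induction n with
    | zero => simp
    | succ k ih =>
      rw [ih, hh (a + k) (le_trans ha (Nat.le_add_right _ _)), pow_succ]
      rw [show a + (k + 1) = a + k + 1 from rfl]
      ring
  -- limit of q^(a+n) * f(a+n)
  have htop : Tendsto (fun n : ℕ => a + n) atTop atTop := by
    simpa [Nat.add_comm] using tendsto_add_atTop_nat a
  have h1 : Tendsto (fun n : ℕ => q ^ (a + n) * f (a + n)) atTop (nhds 0) :=
    hlim.comp htop
  have h2' : Tendsto (fun m : ℕ => q ^ m * φ m) atTop (nhds 0) := by
    have t1 : Tendsto (fun m : ℕ => (m : ℝ) * q ^ m * (1/lam)) atTop (nhds 0) := by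
      simpa only [zero_mul] using (tendsto_self_mul_const_pow_of_lt_one hq0 hq1).mul_const (1/lam)
    have t2 : Tendsto (fun m : ℕ => q ^ m * (g/lam + q/lam^2)) atTop (nhds 0) := by
      simpa only [zero_mul] using (tendsto_pow_atTop_nhds_zero_of_lt_one hq0 hq1).mul_const (g/lam + q/lam^2)
    have := t1.add t2
    rw [add_zero] at this
    refine this.congr (fun m => ?_)
    simp only [hφdef]
    field_simp
    ring
  have h2 : Tendsto (fun n : ℕ => q ^ (a + n) * φ (a + n)) atTop (nhds 0) :=
    h2'.comp htop
  have h3 : Tendsto (fun n : ℕ => q ^ (a + n) * h (a + n)) atTop (nhds 0) := by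
    have := h1.sub h2
    rw [sub_zero] at this
    refine this.congr (fun n => ?_)
    simp only [hhdef]; ring
  have hconst : ∀ n : ℕ, q ^ (a + n) * h (a + n) = q ^ a * h a := by
    intro n
    rw [pow_add, mul_assoc, ← hiter n]
  have hzero : q ^ a * h a = 0 := by
    have : Tendsto (fun _ : ℕ => q ^ a * h a) atTop (nhds 0) := by
      refine h3.congr (fun n => (hconst n))
    exact tendsto_nhds_unique tendsto_const_nhds this
  rcases eq_or_lt_of_le hq0 with hq | hq
  · -- q = 0, lam = 1
    have hrec' := hrec a ha
    have hφa := hφ a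
    rw [← hq] at hrec' hφa
    simp only [zero_mul, add_zero] at hrec' hφa
    -- f a = a + g = φ a
    show f a = φ a
    rw [hrec', hφa]
  · have hha : h a = 0 := by
      have hpow : q ^ a ≠ 0 := pow_ne_zero _ (ne_of_gt hq)
      exact (mul_eq_zero.mp hzero).resolve_left hpow
    have hfin : f a - (((a:ℝ) + g)/lam + q/lam^2) = 0 := hha
    linarith [hfin]
end

section
/- Let 0 < λ ≤ 1. For m₁, m₂ ≥ 0 with m₁ < m₂, let β(m) denote the unique positive root of (1/2)β² + (1/λ − 1/2)β − m = 0 and define the idle region Π_m = {(a,d) : a ≥ 1, 0 ≤ d < D_a(m)}, where D_a(m) = (1 − λ + aλ)β(m) − λ(a−1)a/2 for a < β(m) and D_a(m) = λm for a ≥ β(m). Then Π_{m₁} ⊆ Π_{m₂}; moreover Π₀ = ∅ and ⋃_{m≥0} Π_m is the entire state space {(a,d) : a ≥ 1, d ≥ 0}. -/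
/-- The base threshold `β(m)`: unique nonnegative root of
`(1/2)β² + (1/λ − 1/2)β − m = 0`. -/
noncomputable def betaRoot (lam m : ℝ) : ℝ :=
  -(1/lam - 1/2) + Real.sqrt ((1/lam - 1/2)^2 + 2*m)

/-- The thresholds `D_a(m)` of Theorem 1. -/
noncomputable def thresholdD (lam m : ℝ) (a : ℕ) : ℝ :=
  if (a : ℝ) < betaRoot lam m then
    (1 - lam + (a:ℝ)*lam) * betaRoot lam m - lam * ((a:ℝ)-1)*(a:ℝ)/2
  else lam * m

/-- The idle region `Π_m`. -/
noncomputable def idleRegion (lam m : ℝ) : Set (ℕ × ℕ) :=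
  {p | 1 ≤ p.1 ∧ (p.2 : ℝ) < thresholdD lam m p.1}

lemma c_pos {lam : ℝ} (hlam0 : 0 < lam) (hlam1 : lam ≤ 1) : 0 < 1/lam - 1/2 := by
  have : (1:ℝ) ≤ 1/lam := by
    rw [le_div_iff₀ hlam0]; linarith
  linarith

lemma beta_nonneg {lam m : ℝ} (hlam0 : 0 < lam) (hlam1 : lam ≤ 1) (hm : 0 ≤ m) :
    0 ≤ betaRoot lam m := by
  have hc := c_pos hlam0 hlam1
  unfold betaRoot
  have h1 : (1/lam - 1/2) ≤ Real.sqrt ((1/lam - 1/2)^2 + 2*m) := by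
    have := Real.sqrt_le_sqrt (show (1/lam-1/2)^2 ≤ (1/lam-1/2)^2 + 2*m by linarith)
    rwa [Real.sqrt_sq hc.le] at this
  linarith

lemma beta_eq {lam m : ℝ} (hlam0 : 0 < lam) (hlam1 : lam ≤ 1) (hm : 0 ≤ m) :
    (betaRoot lam m)^2/2 + (1/lam - 1/2) * betaRoot lam m = m := by
  have hc := c_pos hlam0 hlam1
  have hs : (Real.sqrt ((1/lam - 1/2)^2 + 2*m))^2 = (1/lam - 1/2)^2 + 2*m :=
    Real.sq_sqrt (by nlinarith)
  unfold betaRoot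
  nlinarith [hs]

lemma beta_lt {lam m₁ m₂ : ℝ} (hlam0 : 0 < lam) (hlam1 : lam ≤ 1) (hm : 0 ≤ m₁)
    (h : m₁ < m₂) : betaRoot lam m₁ < betaRoot lam m₂ := by
  have hc := c_pos hlam0 hlam1
  unfold betaRoot
  have := Real.sqrt_lt_sqrt (show (0:ℝ) ≤ (1/lam-1/2)^2 + 2*m₁ by nlinarith)
    (show (1/lam-1/2)^2 + 2*m₁ < (1/lam-1/2)^2 + 2*m₂ by linarith)
  linarith

lemma beta_zero {lam : ℝ} (hlam0 : 0 < lam) (hlam1 : lam ≤ 1) : betaRoot lam 0 = 0 := by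
  have hc := c_pos hlam0 hlam1
  unfold betaRoot
  rw [mul_zero, add_zero, Real.sqrt_sq hc.le]
  ring

lemma thresholdD_mono {lam m₁ m₂ : ℝ} (hlam0 : 0 < lam) (hlam1 : lam ≤ 1)
    (hm : 0 ≤ m₁) (h : m₁ < m₂) {a : ℕ} (ha : 1 ≤ a) :
    thresholdD lam m₁ a ≤ thresholdD lam m₂ a := by
  have hc := c_pos hlam0 hlam1
  have hb1 := beta_nonneg hlam0 hlam1 hm
  have hb2 := beta_nonneg hlam0 hlam1 (le_of_lt (lt_of_le_of_lt hm h))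
  have hlt := beta_lt hlam0 hlam1 hm h
  have heq1 := beta_eq hlam0 hlam1 hm
  have ha' : (1:ℝ) ≤ (a:ℝ) := by exact_mod_cast ha
  set β₁ := betaRoot lam m₁
  set β₂ := betaRoot lam m₂
  unfold thresholdD
  by_cases h1 : (a:ℝ) < β₁
  · rw [if_pos h1, if_pos (h1.trans hlt)]
    nlinarith [mul_nonneg (sub_nonneg.mpr ha') hlam0.le]
  · rw [if_neg h1]
    push_neg at h1
    by_cases h2 : (a:ℝ) < β₂
    · rw [if_pos h2]
      have key : lam * m₁ = lam * β₁^2/2 + (1 - lam/2) * β₁ := by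
        have : lam * ((β₁)^2/2 + (1/lam - 1/2) * β₁) = lam * m₁ := by rw [heq1]
        field_simp at this ⊢
        nlinarith [this]
      rw [key]
      nlinarith [mul_nonneg (sub_nonneg.mpr hlt.le) (show (0:ℝ) ≤ 1 + lam*(β₁-1) by nlinarith),
        mul_nonneg (mul_nonneg hlam0.le (sub_nonneg.mpr h1)) (sub_nonneg.mpr h2.le),
        mul_nonneg (mul_nonneg hlam0.le (sub_nonneg.mpr h1)) (sub_nonneg.mpr h1)]
    · rw [if_neg h2]
      nlinarith

/-- indexability — idle regions grow with m, are empty at 0,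
and exhaust the state space. -/
theorem stmt9 (lam : ℝ) (hlam0 : 0 < lam) (hlam1 : lam ≤ 1) :
    (∀ m₁ m₂ : ℝ, 0 ≤ m₁ → m₁ < m₂ → idleRegion lam m₁ ⊆ idleRegion lam m₂) ∧
    idleRegion lam 0 = ∅ ∧
    (⋃ m ∈ Set.Ici (0:ℝ), idleRegion lam m) = {p : ℕ × ℕ | 1 ≤ p.1} := by
  have hc := c_pos hlam0 hlam1
  refine ⟨?_, ?_, ?_⟩
  · intro m₁ m₂ hm h p hp
    exact ⟨hp.1, lt_of_lt_of_le hp.2 (thresholdD_mono hlam0 hlam1 hm h hp.1)⟩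
  · ext ⟨a, d⟩
    simp only [idleRegion, Set.mem_setOf_eq, Set.mem_empty_iff_false, iff_false, not_and]
    intro ha
    rw [thresholdD, beta_zero hlam0 hlam1,
      if_neg (by push_neg; exact Nat.cast_nonneg a)]
    simp
  · ext ⟨a, d⟩
    simp only [Set.mem_iUnion, Set.mem_setOf_eq, idleRegion, Set.mem_Ici]
    constructor
    · rintro ⟨m, hm, h1, h2⟩
      exact h1
    · intro ha
      have ha' : (1:ℝ) ≤ (a:ℝ) := by exact_mod_cast ha
      set c := 1/lam - 1/2 with hcdef
      clear_value c
      set t : ℝ := (a:ℝ) + (d:ℝ) + lam*((a:ℝ)-1)*(a:ℝ)/2 + 1 with htdef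
      clear_value t
      have hq : 0 ≤ lam*((a:ℝ)-1)*(a:ℝ)/2 := by
        have := mul_nonneg (mul_nonneg hlam0.le (sub_nonneg.mpr ha')) (Nat.cast_nonneg a)
        linarith
      have hd0 : (0:ℝ) ≤ (d:ℝ) := Nat.cast_nonneg d
      have ht0 : 0 ≤ t := by simp only [htdef]; linarith
      have hat : (a:ℝ) < t := by
        have : (0:ℝ) ≤ (d:ℝ) := Nat.cast_nonneg d
        simp only [htdef]; linarith
      refine ⟨t^2/2 + c*t, by nlinarith [mul_nonneg hc.le ht0, sq_nonneg t], ha, ?_⟩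
      have hbt : betaRoot lam (t^2/2 + c*t) = t := by
        unfold betaRoot
        have : c^2 + 2*(t^2/2 + c*t) = (c+t)^2 := by ring
        rw [← hcdef, this, Real.sqrt_sq (by linarith)]
        ring
      rw [thresholdD, hbt, if_pos hat]
      have hcoef : (1:ℝ) ≤ 1 - lam + (a:ℝ)*lam := by nlinarith
      have : t ≤ (1 - lam + (a:ℝ)*lam) * t := le_mul_of_one_le_left ht0 hcoef
      simp only [htdef] at this ⊢
      linarith
end

section
/- Let λ ∈ (0,1], and for each m ≥ 0 let D_a(m) denote the thresholds of Theorem 1. For a fixed state (a,d) with a ≥ 1 and d ≥ 0, the Whittle index m(a,d) of Theorem 3 is the unique m ≥ 0 such that d = D_a(m) when d ≤ (λ/2)a² + (1−λ/2)a corresponds to the branch a ≥ β(m) (giving d = λm, i.e., m = d/λ), and when d > (λ/2)a² + (1−λ/2)a corresponds to the branch a < β(m) (giving d = (1−λ+aλ)β(m) − λa(a−1)/2, i.e., β(m) = x := (d + λa(a−1)/2)/(1−λ+aλ) and m = (1/2)x² + (1/λ−1/2)x). -/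
/-- The Whittle index of Theorem 3. -/
noncomputable def whittleIndex (lam : ℝ) (a d : ℕ) : ℝ :=
  if (d : ℝ) > (lam/2) * (a:ℝ)^2 + (1 - lam/2) * (a:ℝ) then
    (1/2) * (((d:ℝ) + lam * (a:ℝ) * ((a:ℝ)-1)/2)/(1 - lam + (a:ℝ)*lam))^2
      + (1/lam - 1/2) * (((d:ℝ) + lam * (a:ℝ) * ((a:ℝ)-1)/2)/(1 - lam + (a:ℝ)*lam))
  else (d:ℝ)/lam

/-!
`betaRoot lam` inverts `betaCost lam` on `[0, ∞)` when `λ ≤ 2`, so `β(m) ≤ a` exactly when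
`m ≤ betaCost a`. Hence `D_a(m) = λ m` for `m ≤ betaCost a`, while beyond that point
`D_a(m) = (1 - λ + aλ) β(m) - λa(a - 1)/2`; both pieces are strictly increasing and meet at the
value `λ · betaCost a = (λ/2)a² + (1 - λ/2)a`. So `D_a` is strictly increasing on `[0, ∞)`, and
solving `D_a(m) = d` on the piece selected by the size of `d` gives the index.
-/

noncomputable def betaCost (lam x : ℝ) : ℝ :=
  (1/2) * x^2 + (1/lam - 1/2) * x

/-- The value of `β(m)` solving `d = D_a(m)` on the branch `a < β(m)`. -/
noncomputable def upperRoot (lam : ℝ) (a d : ℕ) : ℝ :=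
  ((d:ℝ) + lam * (a:ℝ) * ((a:ℝ)-1)/2)/(1 - lam + (a:ℝ)*lam)

section

variable {lam m x : ℝ} {a d : ℕ}

theorem betaRoot_betaCost (hx : 0 ≤ x + (1/lam - 1/2)) :
    betaRoot lam (betaCost lam x) = x := by
  have hsq : (1/lam - 1/2)^2 + 2 * betaCost lam x = (x + (1/lam - 1/2))^2 := by
    unfold betaCost; ring
  rw [betaRoot, hsq, Real.sqrt_sq hx]
  ring

theorem betaRoot_le_iff (hx : 0 ≤ x + (1/lam - 1/2)) :
    betaRoot lam m ≤ x ↔ m ≤ betaCost lam x := by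
  have hsq : (1/lam - 1/2 + x)^2 = (1/lam - 1/2)^2 + 2 * betaCost lam x := by
    unfold betaCost; ring
  rw [betaRoot, neg_add_le_iff_le_add, Real.sqrt_le_iff, and_iff_right (by linarith), hsq]
  constructor <;> intro h <;> linarith

theorem lt_betaRoot_iff (hx : 0 ≤ x + (1/lam - 1/2)) :
    x < betaRoot lam m ↔ betaCost lam x < m := by
  simpa only [not_le] using (betaRoot_le_iff (m := m) hx).not

theorem betaCost_nonneg (hc : 0 ≤ 1/lam - 1/2) (hx : 0 ≤ x) : 0 ≤ betaCost lam x := by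
  unfold betaCost; positivity

theorem betaRoot_strictMonoOn :
    StrictMonoOn (betaRoot lam) (Set.Ici 0) := by
  intro m₁ hm₁ m₂ _ hlt
  have : Real.sqrt ((1/lam - 1/2)^2 + 2*m₁) < Real.sqrt ((1/lam - 1/2)^2 + 2*m₂) :=
    Real.sqrt_lt_sqrt (by have := Set.mem_Ici.1 hm₁; positivity) (by linarith)
  unfold betaRoot
  linarith

theorem lam_mul_betaCost (hlam : lam ≠ 0) :
    lam * betaCost lam x = (lam/2) * x^2 + (1 - lam/2) * x := by
  unfold betaCost; field_simp

theorem thresholdD_eq_ite (hc : 0 ≤ 1/lam - 1/2) :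
    thresholdD lam m a =
      if betaCost lam a < m then
        (1 - lam + (a:ℝ)*lam) * betaRoot lam m - lam * ((a:ℝ)-1)*(a:ℝ)/2
      else lam * m := by
  have hle := betaRoot_le_iff (lam := lam) (m := m) (x := a) (by positivity)
  rw [thresholdD]
  exact if_congr (by rw [← not_le, hle, not_le]) rfl rfl

theorem one_sub_add_mul_pos (hlam : 0 ≤ lam) (ha : 1 ≤ a) : 0 < 1 - lam + (a:ℝ)*lam := by
  have : (1:ℝ) ≤ a := by exact_mod_cast ha
  nlinarith

theorem lt_upperRoot_iff (hq : 0 < 1 - lam + (a:ℝ)*lam) :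
    (a:ℝ) < upperRoot lam a d ↔ (lam/2) * (a:ℝ)^2 + (1 - lam/2) * (a:ℝ) < d := by
  have hE : (a:ℝ) * (1 - lam + (a:ℝ)*lam) - lam * (a:ℝ) * ((a:ℝ)-1)/2
      = (lam/2) * (a:ℝ)^2 + (1 - lam/2) * (a:ℝ) := by ring
  rw [upperRoot, lt_div_iff₀ hq]
  constructor <;> intro h <;> linarith

theorem eq_upperRoot_iff (hq : 0 < 1 - lam + (a:ℝ)*lam) {β : ℝ} :
    β = upperRoot lam a d ↔ (1 - lam + (a:ℝ)*lam) * β - lam * ((a:ℝ)-1)*(a:ℝ)/2 = d := by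
  rw [upperRoot, eq_div_iff hq.ne']
  constructor <;> intro h <;> linarith

theorem whittleIndex_of_le (h : (d:ℝ) ≤ (lam/2) * (a:ℝ)^2 + (1 - lam/2) * (a:ℝ)) :
    whittleIndex lam a d = d / lam := by
  rw [whittleIndex, if_neg h.not_gt]

theorem whittleIndex_of_lt (h : (lam/2) * (a:ℝ)^2 + (1 - lam/2) * (a:ℝ) < d) :
    whittleIndex lam a d = betaCost lam (upperRoot lam a d) := by
  rw [whittleIndex, if_pos h, betaCost, upperRoot]

theorem whittleIndex_le_betaCost (hlam : 0 < lam)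
    (h : (d:ℝ) ≤ (lam/2) * (a:ℝ)^2 + (1 - lam/2) * (a:ℝ)) :
    whittleIndex lam a d ≤ betaCost lam a := by
  rwa [whittleIndex_of_le h, div_le_iff₀' hlam, lam_mul_betaCost hlam.ne']

theorem betaRoot_whittleIndex_of_lt (hc : 0 ≤ 1/lam - 1/2) (hq : 0 < 1 - lam + (a:ℝ)*lam)
    (h : (lam/2) * (a:ℝ)^2 + (1 - lam/2) * (a:ℝ) < d) :
    betaRoot lam (whittleIndex lam a d) = upperRoot lam a d := by
  have hx := (lt_upperRoot_iff hq).2 h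
  rw [whittleIndex_of_lt h, betaRoot_betaCost (by linarith [(a.cast_nonneg : (0:ℝ) ≤ a)])]

theorem whittleIndex_nonneg (hlam : 0 < lam) (hc : 0 ≤ 1/lam - 1/2) (ha : 1 ≤ a) :
    0 ≤ whittleIndex lam a d := by
  rcases le_or_gt (d:ℝ) ((lam/2) * (a:ℝ)^2 + (1 - lam/2) * (a:ℝ)) with h | h
  · rw [whittleIndex_of_le h]; positivity
  · have hx := (lt_upperRoot_iff (one_sub_add_mul_pos hlam.le ha)).2 h
    rw [whittleIndex_of_lt h]
    exact betaCost_nonneg hc (a.cast_nonneg.trans hx.le)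

theorem thresholdD_whittleIndex (hlam : 0 < lam) (hc : 0 ≤ 1/lam - 1/2) (ha : 1 ≤ a) :
    thresholdD lam (whittleIndex lam a d) a = d := by
  have hq := one_sub_add_mul_pos hlam.le ha
  rw [thresholdD_eq_ite hc]
  rcases le_or_gt (d:ℝ) ((lam/2) * (a:ℝ)^2 + (1 - lam/2) * (a:ℝ)) with h | h
  · rw [if_neg (whittleIndex_le_betaCost hlam h).not_gt, whittleIndex_of_le h]
    field_simp
  · have hx := (lt_upperRoot_iff hq).2 h
    have hβ := betaRoot_whittleIndex_of_lt hc hq h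
    rw [if_pos ((lt_betaRoot_iff (by positivity)).1 (hβ ▸ hx)), hβ]
    exact (eq_upperRoot_iff hq).1 rfl

theorem thresholdD_strictMonoOn (hlam : 0 < lam) (hc : 0 ≤ 1/lam - 1/2) (ha : 1 ≤ a) :
    StrictMonoOn (fun m => thresholdD lam m a) (Set.Ici 0) := by
  have hq := one_sub_add_mul_pos hlam.le ha
  have hmeet : (1 - lam + (a:ℝ)*lam) * a - lam * ((a:ℝ)-1)*(a:ℝ)/2 = lam * betaCost lam a := by
    rw [lam_mul_betaCost hlam.ne']; ring
  intro m₁ hm₁ m₂ hm₂ hlt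
  simp only [thresholdD_eq_ite hc]
  split_ifs with h₁ h₂ h₂
  · have := betaRoot_strictMonoOn (lam := lam) hm₁ hm₂ hlt
    gcongr
  · linarith
  · have hβ : (a:ℝ) < betaRoot lam m₂ := (lt_betaRoot_iff (by positivity)).2 h₂
    calc lam * m₁ ≤ lam * betaCost lam a := by gcongr; exact not_lt.1 h₁
      _ = (1 - lam + (a:ℝ)*lam) * a - lam * ((a:ℝ)-1)*(a:ℝ)/2 := hmeet.symm
      _ < _ := by gcongr
  · exact mul_lt_mul_of_pos_left hlt hlam

end

/-- the Whittle index `m(a,d)` is the unique `m ≥ 0` with `d = D_a(m)`,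
with the lower branch giving `m = d/λ` (where `a ≥ β(m)`) and the upper branch giving
`β(m) = x = (d + λa(a−1)/2)/(1−λ+aλ)`, i.e. `m = (1/2)x² + (1/λ−1/2)x`. -/
theorem stmt15 (lam : ℝ) (hlam0 : 0 < lam) (hlam1 : lam ≤ 1)
    (a d : ℕ) (ha : 1 ≤ a) :
    0 ≤ whittleIndex lam a d ∧
    (d : ℝ) = thresholdD lam (whittleIndex lam a d) a ∧
    (∀ m : ℝ, 0 ≤ m → (d : ℝ) = thresholdD lam m a → m = whittleIndex lam a d) ∧
    ((d : ℝ) ≤ (lam/2) * (a:ℝ)^2 + (1 - lam/2) * (a:ℝ) →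
      (a : ℝ) ≥ betaRoot lam (whittleIndex lam a d) ∧ whittleIndex lam a d = (d:ℝ)/lam) ∧
    ((d : ℝ) > (lam/2) * (a:ℝ)^2 + (1 - lam/2) * (a:ℝ) →
      (a : ℝ) < betaRoot lam (whittleIndex lam a d) ∧
      betaRoot lam (whittleIndex lam a d)
        = ((d:ℝ) + lam * (a:ℝ) * ((a:ℝ)-1)/2)/(1 - lam + (a:ℝ)*lam)) := by
  have hc : 0 ≤ 1/lam - 1/2 := by
    have : 1 ≤ 1/lam := by rw [le_div_iff₀ hlam0]; linarith
    linarith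
  have hq := one_sub_add_mul_pos hlam0.le ha
  have hW0 : 0 ≤ whittleIndex lam a d := whittleIndex_nonneg hlam0 hc ha
  have hW : thresholdD lam (whittleIndex lam a d) a = d := thresholdD_whittleIndex hlam0 hc ha
  refine ⟨hW0, hW.symm, fun m hm hd => ?_, fun h => ?_, fun h => ?_⟩
  · exact (thresholdD_strictMonoOn hlam0 hc ha).injOn hm hW0 (hd.symm.trans hW.symm)
  · exact ⟨(betaRoot_le_iff (by positivity)).2 (whittleIndex_le_betaCost hlam0 h),
      whittleIndex_of_le h⟩
  · have hβ := betaRoot_whittleIndex_of_lt hc hq h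
    exact ⟨hβ ▸ (lt_upperRoot_iff hq).2 h, hβ⟩
end

section
/- Let λ ∈ (0,1], m ≥ 0, β the positive root of (1/2)β² + (1/λ−1/2)β − m = 0, and suppose f satisfies: f(a,d) = f(a',d') whenever a + d = a' + d' and both states are in the idle region (d < D_a, d' < D_{a'}), f(a,d) = f(a,0) + m for d ≥ D_a, f(1,0) = 0, f(a,0) = (a−1)J* − a(a−1)/2 for 1 ≤ a ≤ β, f(a,0) = (a − J* − 1)/λ + m + 1/λ² for a ≥ β, with J* = 1/λ + β. Then for all a ≥ 1: f(a,0) ≤ f(a,1) ≤ f(a,2) ≤ … (monotonicity of the cost-to-go in d). -/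
/-- monotonicity of the constructed cost-to-go in `d` (Assumption 2). -/
theorem stmt18 (lam m β : ℝ) (hlam0 : 0 < lam) (hlam1 : lam ≤ 1) (hm : 0 ≤ m)
    (hβ : 0 < β) (hroot : (1/2) * β^2 + (1/lam - 1/2) * β - m = 0)
    (f : ℕ → ℕ → ℝ)
    (J : ℝ) (hJ : J = 1/lam + β)
    (D : ℕ → ℝ)
    (hD : ∀ a : ℕ, D a = if (a : ℝ) < β then
        (1 - lam + (a:ℝ)*lam) * β - lam * ((a:ℝ)-1)*(a:ℝ)/2 else lam * m)
    (hidle : ∀ a d a' d' : ℕ, 1 ≤ a → 1 ≤ a' → a + d = a' + d' →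
      (d : ℝ) < D a → (d' : ℝ) < D a' → f a d = f a' d')
    (hsched : ∀ a d : ℕ, 1 ≤ a → D a ≤ (d : ℝ) → f a d = f a 0 + m)
    (hf10 : f 1 0 = 0)
    (hlow : ∀ a : ℕ, 1 ≤ a → (a : ℝ) ≤ β →
      f a 0 = ((a:ℝ) - 1) * J - (a:ℝ) * ((a:ℝ) - 1) / 2)
    (hhigh : ∀ a : ℕ, β ≤ (a : ℝ) →
      f a 0 = ((a:ℝ) - J - 1)/lam + m + 1/lam^2) :
    ∀ a : ℕ, 1 ≤ a → ∀ d : ℕ, f a d ≤ f a (d + 1) := by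
  subst hJ
  have hlamne : lam ≠ 0 := ne_of_gt hlam0
  have hinv : 0 < 1/lam := by positivity
  have hinv1 : 1 ≤ 1/lam := by rw [le_div_iff₀ hlam0]; linarith
  have hmpos : 0 < m := by
    nlinarith [mul_nonneg (show (0:ℝ) ≤ 1/lam - 1 by linarith) hβ.le, sq_nonneg β]
  have hDpos : ∀ n : ℕ, 1 ≤ n → 0 < D n := by
    intro n hn
    have hn1 : (1:ℝ) ≤ n := by exact_mod_cast hn
    rw [hD]
    split_ifs with h
    · have key : (1 - lam + (n:ℝ)*lam) * β - lam * ((n:ℝ)-1)*(n:ℝ)/2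
        = β + lam * (((n:ℝ)-1) * (β - (n:ℝ)/2)) := by ring
      rw [key]
      have h1 : 0 ≤ lam * (((n:ℝ)-1) * (β - (n:ℝ)/2)) :=
        mul_nonneg hlam0.le (mul_nonneg (by linarith) (by linarith))
      linarith
    · exact mul_pos hlam0 hmpos
  have hidle0 : ∀ a d : ℕ, 1 ≤ a → (d:ℝ) < D a → f a d = f (a+d) 0 := by
    intro a d ha hd
    exact hidle a d (a+d) 0 ha (by omega) (by omega) hd
      (by simpa using hDpos (a+d) (by omega))
  have hmono : ∀ n : ℕ, 1 ≤ n → f n 0 ≤ f (n+1) 0 := by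
    intro n hn
    have hn1 : (1:ℝ) ≤ n := by exact_mod_cast hn
    rcases le_or_gt β (n:ℝ) with hb | hb
    · rw [hhigh n hb, hhigh (n+1) (by push_cast; linarith)]
      push_cast
      have e : ((n:ℝ) + 1 - (1/lam+β) - 1)/lam + m + 1/lam^2
          = (((n:ℝ) - (1/lam+β) - 1)/lam + m + 1/lam^2) + 1/lam := by
        field_simp
        ring
      rw [e]
      linarith
    · rcases le_or_gt ((n:ℝ)+1) β with hb2 | hb2
      · rw [hlow n hn hb.le, hlow (n+1) (by omega) (by push_cast; linarith)]
        push_cast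
        nlinarith [hinv]
      · rw [hlow n hn hb.le, hhigh (n+1) (by push_cast; linarith)]
        push_cast
        have e : ((n:ℝ) + 1 - (1/lam+β) - 1)/lam + m + 1/lam^2
            = (((n:ℝ)-1)*(1/lam+β) - (n:ℝ)*((n:ℝ)-1)/2) + 1/lam
              + ((n:ℝ)-β)*((n:ℝ)-β-1)/2 := by
          linear_combination -hroot
        rw [e]
        have hp : 0 < ((n:ℝ)-β)*((n:ℝ)-β-1) :=
          mul_pos_of_neg_of_neg (by linarith) (by linarith)
        linarith
  have hbound : ∀ a d : ℕ, 1 ≤ a → (d:ℝ) < D a → f (a+d) 0 ≤ f a 0 + m := by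
    intro a d ha hd
    have ha1 : (1:ℝ) ≤ a := by exact_mod_cast ha
    have hd0 : (0:ℝ) ≤ d := Nat.cast_nonneg d
    have step1 : f (a+d) 0 ≤ ((a:ℝ)+(d:ℝ) - (1/lam+β) - 1)/lam + m + 1/lam^2 := by
      rcases le_or_gt β ((a:ℝ)+(d:ℝ)) with hb | hb
      · rw [hhigh (a+d) (by push_cast; linarith)]
        push_cast
        linarith
      · rw [hlow (a+d) (by omega) (by push_cast; linarith)]
        push_cast
        have e : ((a:ℝ)+(d:ℝ) - (1/lam+β) - 1)/lam + m + 1/lam^2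
            = (((a:ℝ)+(d:ℝ)-1)*(1/lam+β) - ((a:ℝ)+(d:ℝ))*((a:ℝ)+(d:ℝ)-1)/2)
              + ((a:ℝ)+(d:ℝ)-β)*((a:ℝ)+(d:ℝ)-β-1)/2 := by
          linear_combination -hroot
        rw [e]
        have hp : 0 < ((a:ℝ)+(d:ℝ)-β)*((a:ℝ)+(d:ℝ)-β-1) :=
          mul_pos_of_neg_of_neg (by linarith) (by linarith)
        linarith
    have step2 : ((a:ℝ)+(d:ℝ) - (1/lam+β) - 1)/lam + m + 1/lam^2
        ≤ ((a:ℝ) + D a - (1/lam+β) - 1)/lam + m + 1/lam^2 := by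
      have hx : ((a:ℝ)+(d:ℝ) - (1/lam+β) - 1)/lam ≤ ((a:ℝ) + D a - (1/lam+β) - 1)/lam := by
        gcongr
      linarith
    have step3 : ((a:ℝ) + D a - (1/lam+β) - 1)/lam + m + 1/lam^2 = f a 0 + m := by
      rw [hD a]
      split_ifs with hcase
      · rw [hlow a ha hcase.le]
        field_simp
        ring
      · rw [hhigh a (not_lt.1 hcase)]
        field_simp
        ring
    linarith
  intro a ha d
  rcases lt_or_ge (d:ℝ) (D a) with hid | hsc
  · rcases lt_or_ge ((d:ℝ)+1) (D a) with h2 | h2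
    · rw [hidle0 a d ha hid, hidle0 a (d+1) ha (by push_cast; exact h2)]
      exact hmono (a+d) (by omega)
    · rw [hidle0 a d ha hid, hsched a (d+1) ha (by push_cast; linarith)]
      exact hbound a d ha hid
  · rw [hsched a d ha hsc, hsched a (d+1) ha (by push_cast; linarith)]
end
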